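/- arXiv:2009.04014 — 2 statements merged into one kernel-verified Lean document; each statement's English description precedes it below -/
import Mathlib

section
/- Let {e_k} be a nonincreasing sequence of positive reals and suppose there exist ᾱ > 0, θ ∈ (0,1/2], and k₀ such that ᾱ e_k^{2θ} ≤ e_{k-1} - e_k for all k ≥ k₀. Then e_k ≤ e_{k₀} / (1 + ᾱ e_{k₀}^{2θ-1})^{k-k₀} for all k ≥ k₀; in particular e_k converges to 0 at a linear (geometric) rate. -/
/-- KŁ rate, case `θ ∈ (0,1/2]`: if `(e_k)` is a nonincreasing positive sequence with
`ᾱ e_k^{2θ} ≤ e_{k-1} - e_k` for `k ≥ k₀ ≥ 1`, then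
`e_k ≤ e_{k₀} / (1 + ᾱ e_{k₀}^{2θ-1})^{k-k₀}` for all `k ≥ k₀`. -/
theorem stmt_7 (e : ℕ → ℝ) (hpos : ∀ k, 0 < e k) (hmono : Antitone e)
    (α θ : ℝ) (hα : 0 < α) (hθ : θ ∈ Set.Ioc (0 : ℝ) (1 / 2)) (k₀ : ℕ) (hk₀ : 1 ≤ k₀)
    (hrec : ∀ k, k₀ ≤ k → α * e k ^ (2 * θ) ≤ e (k - 1) - e k) :
    ∀ k, k₀ ≤ k → e k ≤ e k₀ / (1 + α * e k₀ ^ (2 * θ - 1)) ^ (k - k₀) := by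
  obtain ⟨hθ0, hθ2⟩ := hθ
  set c := 1 + α * e k₀ ^ (2 * θ - 1) with hc
  have hek₀ := hpos k₀
  have hrp : 0 < e k₀ ^ (2 * θ - 1) := Real.rpow_pos_of_pos hek₀ _
  have hcpos : 0 < c := by rw [hc]; nlinarith
  have key : ∀ k, k₀ < k → e k * c ≤ e (k - 1) := by
    intro k hk
    have h1 := hrec k hk.le
    have hle : e k ≤ e k₀ := hmono hk.le
    have h2 : e k₀ ^ (2 * θ - 1) ≤ e k ^ (2 * θ - 1) :=
      Real.rpow_le_rpow_of_nonpos (hpos k) hle (by linarith)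
    have h3 : e k ^ (2 * θ - 1) * e k = e k ^ (2 * θ) := by
      rw [← Real.rpow_add_one (hpos k).ne']; ring_nf
    have h4 : e k₀ ^ (2 * θ - 1) * e k ≤ e k ^ (2 * θ) := by
      rw [← h3]; exact mul_le_mul_of_nonneg_right h2 (hpos k).le
    have h5 : α * (e k₀ ^ (2 * θ - 1) * e k) ≤ α * e k ^ (2 * θ) :=
      mul_le_mul_of_nonneg_left h4 hα.le
    rw [hc]; nlinarith
  intro k hk
  obtain ⟨n, rfl⟩ := Nat.exists_eq_add_of_le hk
  rw [Nat.add_sub_cancel_left]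
  induction n with
  | zero => simp
  | succ n ih =>
    have ihn := ih (by omega)
    have hstep := key (k₀ + (n + 1)) (by omega)
    have hsub : k₀ + (n + 1) - 1 = k₀ + n := by omega
    rw [hsub] at hstep
    have hcn : (0 : ℝ) < c ^ n := pow_pos hcpos n
    have hcn1 : (0 : ℝ) < c ^ (n + 1) := pow_pos hcpos (n + 1)
    rw [le_div_iff₀ hcn1]
    rw [le_div_iff₀ hcn] at ihn
    calc e (k₀ + (n + 1)) * c ^ (n + 1) = (e (k₀ + (n + 1)) * c) * c ^ n := by ring
      _ ≤ e (k₀ + n) * c ^ n := mul_le_mul_of_nonneg_right hstep hcn.le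
      _ ≤ e k₀ := ihn
end

section
/- Let {e_k} be a positive, strictly decreasing sequence converging to 0 with ᾱ e_k^{2θ} ≤ e_{k-1} - e_k for all k ≥ k₀, where θ ∈ (1/2, 1) and ᾱ > 0. Then there exists μ > 0 such that e_k ≤ (μ(k - k₀ + 1) + e_{k₀-1}^{1-2θ})^{1/(1-2θ)} for all k ≥ k₀; in particular e_k = O(k^{-1/(2θ-1)}). -/
open Real

lemma bernoulli_neg {t p : ℝ} (ht : 0 < t) (ht1 : t ≤ 1) (hp0 : 0 < p) (hp1 : p < 1) :
    1 + p * (1 - t) ≤ t ^ (-p) := by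
  have h1 : t ^ p ≤ 1 + p * (t - 1) := by
    have := rpow_one_add_le_one_add_mul_self (s := t - 1) (by linarith) hp0.le hp1.le
    simpa using this
  have h3 : 0 < t ^ p := Real.rpow_pos_of_pos ht p
  have h5 : 0 ≤ 1 + p * (1 - t) := by nlinarith
  have h4 : (1 + p * (1 - t)) * t ^ p ≤ 1 := by
    nlinarith [mul_le_mul_of_nonneg_left h1 h5, sq_nonneg (p * (1 - t))]
  rw [Real.rpow_neg ht.le, inv_eq_one_div, le_div_iff₀ h3]
  exact h4

lemma step_ineq {a b θ α : ℝ} (hb : 0 < b) (hba : b ≤ a) (hθ1 : 1 / 2 < θ) (hθ2 : θ < 1)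
    (hα : 0 < α) (hrec : α * b ^ (2 * θ) ≤ a - b) :
    a ^ (1 - 2 * θ) + min ((2 * θ - 1) * α / 2)
      (((2 : ℝ) ^ ((2 * θ - 1) / (2 * θ)) - 1) * a ^ (1 - 2 * θ)) ≤ b ^ (1 - 2 * θ) := by
  have ha : 0 < a := hb.trans_le hba
  have hA : 0 < a ^ (2 * θ) := Real.rpow_pos_of_pos ha _
  have hB : 0 < b ^ (2 * θ) := Real.rpow_pos_of_pos hb _
  have hA' : 0 < a ^ (1 - 2 * θ) := Real.rpow_pos_of_pos ha _
  by_cases hcase : a ^ (2 * θ) ≤ 2 * b ^ (2 * θ)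
  · refine le_trans (add_le_add_right (min_le_left _ _) _) ?_
    -- use Bernoulli on t = b / a
    set q : ℝ := 2 * θ - 1 with hq
    have hq0 : 0 < q := by rw [hq]; linarith
    have hq1 : q < 1 := by rw [hq]; linarith
    have ht : 0 < b / a := div_pos hb ha
    have ht1 : b / a ≤ 1 := (div_le_one ha).mpr hba
    have hber := bernoulli_neg ht ht1 hq0 hq1
    have htq : (b / a) ^ (-q) = b ^ (1 - 2 * θ) / a ^ (1 - 2 * θ) := by
      rw [show -q = 1 - 2 * θ by rw [hq]; ring, Real.div_rpow hb.le ha.le]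
    rw [htq] at hber
    -- multiply by a ^ (1 - 2θ)
    have hmul : a ^ (1 - 2 * θ) + q * (1 - b / a) * a ^ (1 - 2 * θ) ≤ b ^ (1 - 2 * θ) := by
      have := mul_le_mul_of_nonneg_right hber hA'.le
      rw [div_mul_cancel₀ _ hA'.ne'] at this
      linarith [this]
    refine le_trans ?_ hmul
    have key : q * α / 2 ≤ q * (1 - b / a) * a ^ (1 - 2 * θ) := by
      have h1 : q * (1 - b / a) * a ^ (1 - 2 * θ) = q * (a - b) * (a ^ (2 * θ))⁻¹ := by
        have h2 : a ^ ((1 : ℝ) - 2 * θ) = (a - b + b) / a * (a ^ (2 * θ))⁻¹ * a := by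
          rw [← Real.rpow_neg ha.le]
          rw [show (1 : ℝ) - 2 * θ = -(2 * θ) + 1 by ring, Real.rpow_add ha, Real.rpow_one]
          field_simp; ring
        rw [h2]; field_simp; ring
      rw [h1]
      have h3 : α * (a ^ (2 * θ) / 2) ≤ α * b ^ (2 * θ) := by nlinarith
      have h4 : α * b ^ (2 * θ) ≤ a - b := hrec
      rw [mul_assoc, mul_div_assoc]
      apply mul_le_mul_of_nonneg_left _ hq0.le
      rw [← div_eq_mul_inv, le_div_iff₀ hA]
      nlinarith
    linarith [key]
  · push_neg at hcase
    refine le_trans (add_le_add_right (min_le_right _ _) _) ?_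
    have hkey : (2 : ℝ) ^ ((2 * θ - 1) / (2 * θ)) * a ^ (1 - 2 * θ) ≤ b ^ (1 - 2 * θ) := by
      have hr : ((1 : ℝ) - 2 * θ) / (2 * θ) ≤ 0 :=
        div_nonpos_of_nonpos_of_nonneg (by linarith) (by linarith)
      have hle : b ^ (2 * θ) ≤ a ^ (2 * θ) / 2 := by linarith
      have h1 := Real.rpow_le_rpow_of_nonpos hB hle hr
      have hθ0 : (2 * θ) ≠ 0 := by positivity
      have h2 : (b ^ (2 * θ)) ^ (((1 : ℝ) - 2 * θ) / (2 * θ)) = b ^ ((1 : ℝ) - 2 * θ) := by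
        rw [← Real.rpow_mul hb.le]; congr 1; field_simp
      have h3 : (a ^ (2 * θ) / 2) ^ (((1 : ℝ) - 2 * θ) / (2 * θ)) =
          2 ^ ((2 * θ - 1) / (2 * θ)) * a ^ ((1 : ℝ) - 2 * θ) := by
        rw [Real.div_rpow hA.le (by norm_num : (0:ℝ) ≤ 2), ← Real.rpow_mul ha.le,
          show ((1 : ℝ) - 2 * θ) / (2 * θ) = -((2 * θ - 1) / (2 * θ)) by ring,
          Real.rpow_neg (by norm_num : (0:ℝ) ≤ 2)]
        rw [div_inv_eq_mul, show 2 * θ * -((2 * θ - 1) / (2 * θ)) = (1 : ℝ) - 2 * θ by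
          field_simp; ring]
        ring
      rw [h2, h3] at h1
      exact h1
    linarith

/-- KŁ rate, case `θ ∈ (1/2,1)`: sublinear rate `O(k^{-1/(2θ-1)})`. -/
theorem stmt_9 (e : ℕ → ℝ) (hpos : ∀ k, 0 < e k) (hmono : StrictAnti e)
    (hlim : Filter.Tendsto e Filter.atTop (nhds 0))
    (α θ : ℝ) (hα : 0 < α) (hθ : θ ∈ Set.Ioo (1 / 2 : ℝ) 1) (k₀ : ℕ) (hk₀ : 1 ≤ k₀)
    (hrec : ∀ k, k₀ ≤ k → α * e k ^ (2 * θ) ≤ e (k - 1) - e k) :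
    ∃ μ : ℝ, 0 < μ ∧ ∀ k, k₀ ≤ k →
      e k ≤ (μ * ((k : ℝ) - (k₀ : ℝ) + 1) + e (k₀ - 1) ^ (1 - 2 * θ)) ^ ((1 : ℝ) / (1 - 2 * θ)) := by
  obtain ⟨hθ1, hθ2⟩ := hθ
  set E : ℝ := e (k₀ - 1) ^ (1 - 2 * θ) with hE
  have hEpos : 0 < E := Real.rpow_pos_of_pos (hpos _) _
  set c : ℝ := (2 : ℝ) ^ ((2 * θ - 1) / (2 * θ)) with hc
  have hc1 : 1 < c := by
    apply Real.one_lt_rpow_iff_of_pos (by norm_num) |>.mpr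
    exact Or.inl ⟨by norm_num, div_pos (by linarith) (by linarith)⟩
  set μ : ℝ := min ((2 * θ - 1) * α / 2) ((c - 1) * E) with hμdef
  have hμ : 0 < μ := lt_min (by nlinarith) (by nlinarith)
  refine ⟨μ, hμ, ?_⟩
  have hstep : ∀ k, k₀ ≤ k → e (k - 1) ^ (1 - 2 * θ) + μ ≤ e k ^ (1 - 2 * θ) := by
    intro k hk
    have hba : e k ≤ e (k - 1) := hmono.antitone (Nat.sub_le k 1)
    have hsi := step_ineq (hpos k) hba hθ1 hθ2 hα (hrec k hk)
    have hEa : E ≤ e (k - 1) ^ (1 - 2 * θ) := by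
      apply Real.rpow_le_rpow_of_nonpos (hpos (k - 1))
        (hmono.antitone (by omega : k₀ - 1 ≤ k - 1)) (by linarith)
    have hμle : μ ≤ min ((2 * θ - 1) * α / 2) ((c - 1) * e (k - 1) ^ (1 - 2 * θ)) := by
      apply le_min (min_le_left _ _)
      refine le_trans (min_le_right _ _) ?_
      nlinarith
    linarith [le_trans (add_le_add_right hμle _) hsi]
  have hbound : ∀ k, k₀ ≤ k → μ * ((k : ℝ) - (k₀ : ℝ) + 1) + E ≤ e k ^ (1 - 2 * θ) := by
    intro k hk
    induction k, hk using Nat.le_induction with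
    | base =>
      have := hstep k₀ le_rfl
      simp only [sub_self, zero_add, mul_one]
      linarith
    | succ n hn ih =>
      have h1 := hstep (n + 1) (by omega)
      simp only [Nat.add_sub_cancel] at h1
      push_cast
      push_cast at ih
      linarith
  intro k hk
  have hb := hbound k hk
  have hkk : (k₀ : ℝ) ≤ (k : ℝ) := Nat.cast_le.mpr hk
  have hS : 0 < μ * ((k : ℝ) - (k₀ : ℝ) + 1) + E := by nlinarith
  have h2 := Real.rpow_le_rpow_of_nonpos hS hb
    (show (1 : ℝ) / (1 - 2 * θ) ≤ 0 from
      div_nonpos_of_nonneg_of_nonpos zero_le_one (by linarith))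
  rw [← Real.rpow_mul (hpos k).le,
    mul_one_div, div_self (by linarith : (1 : ℝ) - 2 * θ ≠ 0), Real.rpow_one] at h2
  exact h2
end
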